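/- arXiv:1711.11412 — 3 statements merged into one kernel-verified Lean document; each statement's English description precedes it below -/
import Mathlib

section
/- For every graph G with at least one vertex and every weight function w : V(G) → ℕ, the connected safe number satisfies cs(G,w) ≤ 2·s(G,w). -/
/-- Total weight of a set of vertices. -/
noncomputable def setWeight {V : Type*} (w : V → ℕ) (A : Set V) : ℕ := ∑ᶠ u ∈ A, w u

/-- `C` is the vertex set of a connected component of the subgraph of `G` induced by `S`. -/
def IsCompOf {V : Type*} (G : SimpleGraph V) (S C : Set V) : Prop :=
  C ⊆ S ∧ (G.induce C).Connected ∧ ∀ u ∈ C, ∀ v ∈ S, G.Adj u v → v ∈ C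

/-- `S` is a (nonempty) `w`-safe set of `G`: every component `D` of `G - S` adjacent to a
component `C` of `G[S]` satisfies `w(D) ≤ w(C)`. -/
def IsSafeSet {V : Type*} (G : SimpleGraph V) (w : V → ℕ) (S : Set V) : Prop :=
  S.Nonempty ∧ ∀ C D : Set V, IsCompOf G S C → IsCompOf G Sᶜ D →
    (∃ u ∈ C, ∃ v ∈ D, G.Adj u v) → setWeight w D ≤ setWeight w C

/-- The safe number `s(G,w)`: minimum weight of a `w`-safe set. -/
noncomputable def safeNum {V : Type*} (G : SimpleGraph V) (w : V → ℕ) : ℕ :=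
  sInf {m | ∃ S : Set V, IsSafeSet G w S ∧ setWeight w S = m}

/-- The connected safe number `cs(G,w)`: minimum weight of a connected `w`-safe set. -/
noncomputable def connSafeNum {V : Type*} (G : SimpleGraph V) (w : V → ℕ) : ℕ :=
  sInf {m | ∃ S : Set V, IsSafeSet G w S ∧ (G.induce S).Connected ∧ setWeight w S = m}

/-!
Given a safe set `S`, grow a connected set `T` that is a union of components
of `G[S]` and of `G - S`, keeping the weight of `T \ S` at most that of `T ∩ S`; then
`w(T) ≤ 2 w(T ∩ S) ≤ 2 w(S)`. A component `D` of `G - S` can always be added together with an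
adjacent component `C` of `G[S]`, since `w(D) ≤ w(C)` by safety of `S`. Hence, once `T` is
maximal, every component of `G - T` touching `T` lies inside a component `D` of `G - S` adjacent
to a component `C ⊆ T` of `G[S]`, and `w(D) ≤ w(C) ≤ w(T)` shows that `T` is safe.
-/

section Weight

variable {V : Type*} (w : V → ℕ)

lemma setWeight_empty : setWeight w (∅ : Set V) = 0 := by
  simp [setWeight]

variable [Finite V]

lemma setWeight_mono {A B : Set V} (h : A ⊆ B) : setWeight w A ≤ setWeight w B := by
  rw [setWeight, setWeight, ← finsum_mem_add_sdiff h B.toFinite]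
  exact Nat.le_add_right _ _

lemma setWeight_union {A B : Set V} (h : Disjoint A B) :
    setWeight w (A ∪ B) = setWeight w A + setWeight w B :=
  finsum_mem_union h A.toFinite B.toFinite

lemma setWeight_inter_add_diff (A S : Set V) :
    setWeight w (A ∩ S) + setWeight w (A \ S) = setWeight w A :=
  finsum_mem_inter_add_sdiff S A.toFinite

end Weight

section Components

variable {V : Type*} {G : SimpleGraph V}

lemma subset_of_preconnected_of_adj_closed {Y Z : Set V} (hY : (G.induce Y).Preconnected)
    (hZ : ∀ u ∈ Y, ∀ v ∈ Y, G.Adj u v → u ∈ Z → v ∈ Z) (hYZ : (Y ∩ Z).Nonempty) : Y ⊆ Z := by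
  obtain ⟨y₀, hy₀Y, hy₀Z⟩ := hYZ
  intro y hyY
  by_contra hyZ
  obtain ⟨p⟩ := hY ⟨y₀, hy₀Y⟩ ⟨y, hyY⟩
  obtain ⟨d, -, hd₁, hd₂⟩ := p.exists_boundary_dart {z | z.1 ∈ Z} hy₀Z hyZ
  exact hd₂ (hZ _ d.fst.2 _ d.snd.2 d.adj hd₁)

lemma IsCompOf.subset_of_preconnected {A C Y : Set V} (hC : IsCompOf G A C) (hYA : Y ⊆ A)
    (hY : (G.induce Y).Preconnected) (hYC : (Y ∩ C).Nonempty) : Y ⊆ C :=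
  subset_of_preconnected_of_adj_closed hY (fun u _ v hv huv hu ↦ hC.2.2 u hu v (hYA hv) huv) hYC

lemma IsCompOf.eq_of_connected {A C : Set V} (hC : IsCompOf G A C)
    (hA : (G.induce A).Connected) : C = A := by
  obtain ⟨c, hc⟩ := hC.2.1.nonempty
  exact hC.1.antisymm (hC.subset_of_preconnected subset_rfl hA.preconnected ⟨c, hC.1 hc, hc⟩)

lemma exists_isCompOf [Finite V] {A : Set V} {v : V} (hv : v ∈ A) :
    ∃ C, IsCompOf G A C ∧ v ∈ C := by
  obtain ⟨C, hvC, hC⟩ := Finite.exists_le_maximal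
    (p := fun X : Set V ↦ X ⊆ A ∧ (G.induce X).Connected) (a := {v})
    ⟨Set.singleton_subset_iff.2 hv, (SimpleGraph.connected_iff _).2
      ⟨SimpleGraph.Preconnected.of_subsingleton, inferInstance⟩⟩
  refine ⟨C, ⟨hC.prop.1, hC.prop.2, fun u hu x hx hux ↦ ?_⟩, hvC rfl⟩
  have hCx : C ∪ {x} ⊆ C := hC.le_of_ge
    ⟨Set.union_subset hC.prop.1 (Set.singleton_subset_iff.2 hx),
      SimpleGraph.connected_induce_union hC.prop.2.preconnected
        SimpleGraph.Preconnected.of_subsingleton hu rfl hux⟩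
    Set.subset_union_left
  exact hCx (Or.inr rfl)

end Components

section Patches

variable {V : Type*} {G : SimpleGraph V} {w : V → ℕ} {S T : Set V}

/-- `T` is a union of components of `G[S]` and of `G - S`. -/
def IsSideClosed (G : SimpleGraph V) (S T : Set V) : Prop :=
  ∀ u ∈ T, ∀ v, G.Adj u v → (u ∈ S ↔ v ∈ S) → v ∈ T

lemma isSideClosed_compl : IsSideClosed G Sᶜ T ↔ IsSideClosed G S T := by
  simp only [IsSideClosed, Set.mem_compl_iff, not_iff_not]

lemma IsSideClosed.union {X : Set V} (hT : IsSideClosed G S T) (hX : IsSideClosed G S X) :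
    IsSideClosed G S (T ∪ X) := by
  rintro u (hu | hu) v huv hside
  · exact Or.inl (hT u hu v huv hside)
  · exact Or.inr (hX u hu v huv hside)

lemma IsCompOf.isSideClosed {C : Set V} (hC : IsCompOf G S C) : IsSideClosed G S C :=
  fun u hu v huv hside ↦ hC.2.2 u hu v (hside.1 (hC.1 hu)) huv

lemma IsSideClosed.subset_of_isCompOf {C : Set V} (hT : IsSideClosed G S T)
    (hC : IsCompOf G S C) (hCT : (C ∩ T).Nonempty) : C ⊆ T :=
  subset_of_preconnected_of_adj_closed hC.2.1.preconnected
    (fun a ha b hb hab haT ↦ hT a haT b hab (iff_of_true (hC.1 ha) (hC.1 hb))) hCT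

lemma IsSideClosed.disjoint_of_isCompOf {C : Set V} {v : V} (hT : IsSideClosed G S T)
    (hC : IsCompOf G S C) (hvC : v ∈ C) (hvT : v ∉ T) : Disjoint T C :=
  Set.disjoint_right.2 fun x hxC hxT ↦ hvT (hT.subset_of_isCompOf hC ⟨x, hxC, hxT⟩ hvC)

structure IsBalancedPatch (G : SimpleGraph V) (w : V → ℕ) (S T : Set V) : Prop where
  connected : (G.induce T).Connected
  sideClosed : IsSideClosed G S T
  weight_diff_le : setWeight w (T \ S) ≤ setWeight w (T ∩ S)

lemma IsCompOf.isBalancedPatch {C : Set V} (hC : IsCompOf G S C) : IsBalancedPatch G w S C where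
  connected := hC.2.1
  sideClosed := hC.isSideClosed
  weight_diff_le := by rw [Set.sdiff_eq_empty.2 hC.1, setWeight_empty]; exact Nat.zero_le _

lemma isBalancedPatch_union_of_isCompOf {C D : Set V} {a b : V} (hD : IsCompOf G Sᶜ D)
    (hC : IsCompOf G S C) (ha : a ∈ D) (hb : b ∈ C) (hab : G.Adj a b)
    (hw : setWeight w D ≤ setWeight w C) : IsBalancedPatch G w S (D ∪ C) where
  connected := SimpleGraph.connected_induce_union hD.2.1.preconnected hC.2.1.preconnected ha hb hab
  sideClosed := (isSideClosed_compl.1 hD.isSideClosed).union hC.isSideClosed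
  weight_diff_le := by
    have hDS : (D ∪ C) \ S = D := by
      ext x; have := @hD.1 x; have := @hC.1 x; simp only [Set.mem_sdiff, Set.mem_union]; tauto
    have hCS : (D ∪ C) ∩ S = C := by
      ext x; have := @hD.1 x; have := @hC.1 x; simp only [Set.mem_inter_iff, Set.mem_union]; tauto
    rwa [hDS, hCS]

variable [Finite V]

lemma IsBalancedPatch.setWeight_le (hT : IsBalancedPatch G w S T) :
    setWeight w T ≤ 2 * setWeight w S := by
  rw [← setWeight_inter_add_diff w T S]
  have := setWeight_mono w (Set.inter_subset_right : T ∩ S ⊆ S)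
  linarith [hT.weight_diff_le]

lemma IsBalancedPatch.union {X : Set V} {u v : V} (hT : IsBalancedPatch G w S T)
    (hX : IsBalancedPatch G w S X) (hTX : Disjoint T X) (hu : u ∈ T) (hv : v ∈ X)
    (huv : G.Adj u v) : IsBalancedPatch G w S (T ∪ X) where
  connected := SimpleGraph.connected_induce_union hT.connected.preconnected
    hX.connected.preconnected hu hv huv
  sideClosed := hT.sideClosed.union hX.sideClosed
  weight_diff_le := by
    rw [Set.union_sdiff_distrib, Set.union_inter_distrib_right,
      setWeight_union w (hTX.mono Set.sdiff_subset Set.sdiff_subset),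
      setWeight_union w (hTX.mono Set.inter_subset_left Set.inter_subset_left)]
    exact Nat.add_le_add hT.weight_diff_le hX.weight_diff_le

lemma not_disjoint_of_maximal_isBalancedPatch {X : Set V} {u v : V}
    (hT : Maximal (IsBalancedPatch G w S) T) (hX : IsBalancedPatch G w S X) (hu : u ∈ T)
    (hv : v ∈ X) (huv : G.Adj u v) : ¬ Disjoint T X := fun hTX ↦
  Set.disjoint_left.1 hTX (hT.le_of_ge (hT.prop.union hX hTX hu hv huv) Set.subset_union_left
    (Or.inr hv)) hv

lemma notMem_of_adj_of_maximal_isBalancedPatch {u v : V}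
    (hT : Maximal (IsBalancedPatch G w S) T) (hu : u ∈ T) (hvT : v ∉ T) (huv : G.Adj u v) :
    v ∉ S := by
  intro hvS
  obtain ⟨C, hC, hvC⟩ := exists_isCompOf (G := G) hvS
  exact not_disjoint_of_maximal_isBalancedPatch hT hC.isBalancedPatch hu hvC huv
    (hT.prop.sideClosed.disjoint_of_isCompOf hC hvC hvT)

/-- Otherwise `D` together with the component of `G[S]` through `b` could be added to `T`:
by safety of `S` it outweighs `D`. -/
lemma IsSafeSet.mem_of_adj_of_maximal_isBalancedPatch {D : Set V} {u v a b : V}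
    (hS : IsSafeSet G w S) (hT : Maximal (IsBalancedPatch G w S) T) (hD : IsCompOf G Sᶜ D)
    (hu : u ∈ T) (hvD : v ∈ D) (hvT : v ∉ T) (huv : G.Adj u v)
    (ha : a ∈ D) (hbS : b ∈ S) (hab : G.Adj a b) : b ∈ T := by
  by_contra hbT
  obtain ⟨C, hC, hbC⟩ := exists_isCompOf (G := G) hbS
  have hTD : Disjoint T D :=
    (isSideClosed_compl.2 hT.prop.sideClosed).disjoint_of_isCompOf hD hvD hvT
  have hTC : Disjoint T C := hT.prop.sideClosed.disjoint_of_isCompOf hC hbC hbT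
  have hw : setWeight w D ≤ setWeight w C := hS.2 C D hC hD ⟨b, hbC, a, ha, hab.symm⟩
  exact not_disjoint_of_maximal_isBalancedPatch hT
    (isBalancedPatch_union_of_isCompOf hD hC ha hbC hab hw) hu (Or.inl hvD) huv
    (Set.disjoint_union_right.2 ⟨hTD, hTC⟩)

lemma IsSafeSet.of_maximal_isBalancedPatch (hS : IsSafeSet G w S)
    (hT : Maximal (IsBalancedPatch G w S) T) : IsSafeSet G w T := by
  obtain ⟨t, ht⟩ := hT.prop.connected.nonempty
  refine ⟨⟨t, ht⟩, ?_⟩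
  rintro C' D' hC' hD' ⟨u, huC', v, hvD', huv⟩
  rw [hC'.eq_of_connected hT.prop.connected] at huC' ⊢
  have hvT : v ∉ T := hD'.1 hvD'
  have hvS : v ∉ S := notMem_of_adj_of_maximal_isBalancedPatch hT huC' hvT huv
  have huS : u ∈ S := by
    by_contra huS
    exact hvT (hT.prop.sideClosed u huC' v huv (iff_of_false huS hvS))
  obtain ⟨D, hD, hvD⟩ := exists_isCompOf (G := G) (A := Sᶜ) hvS
  obtain ⟨C, hC, huC⟩ := exists_isCompOf (G := G) huS
  have hCT : C ⊆ T := hT.prop.sideClosed.subset_of_isCompOf hC ⟨u, huC, huC'⟩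
  have hD'D : D' ⊆ D := by
    refine subset_of_preconnected_of_adj_closed hD'.2.1.preconnected ?_ ⟨v, hvD', hvD⟩
    intro a _ b hbD' hab haD
    have hbS : b ∉ S := fun hbS ↦
      hD'.1 hbD' (hS.mem_of_adj_of_maximal_isBalancedPatch hT hD huC' hvD hvT huv haD hbS hab)
    exact hD.2.2 a haD b hbS hab
  calc setWeight w D' ≤ setWeight w D := setWeight_mono w hD'D
    _ ≤ setWeight w C := hS.2 C D hC hD ⟨u, huC, v, hvD, huv⟩
    _ ≤ setWeight w T := setWeight_mono w hCT

lemma IsSafeSet.exists_connected_setWeight_le (hS : IsSafeSet G w S) :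
    ∃ T, IsSafeSet G w T ∧ (G.induce T).Connected ∧ setWeight w T ≤ 2 * setWeight w S := by
  obtain ⟨v, hv⟩ := hS.1
  obtain ⟨C, hC, -⟩ := exists_isCompOf (G := G) hv
  obtain ⟨T, -, hT⟩ := Finite.exists_le_maximal (hC.isBalancedPatch (w := w))
  exact ⟨T, hS.of_maximal_isBalancedPatch hT, hT.prop.connected, hT.prop.setWeight_le⟩

end Patches

theorem connSafeNum_le_two_mul_safeNum_general {V : Type*} [Fintype V]
    (G : SimpleGraph V) (w : V → ℕ) :
    connSafeNum G w ≤ 2 * safeNum G w := by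
  rcases Set.eq_empty_or_nonempty {m | ∃ S : Set V, IsSafeSet G w S ∧ setWeight w S = m}
    with hnone | hsome
  · have hconn : connSafeNum G w = 0 := Nat.sInf_eq_zero.2 <| Or.inr <|
      Set.eq_empty_of_forall_notMem fun m ⟨S, hS, _, hm⟩ ↦ hnone.subset ⟨S, hS, hm⟩
    rw [hconn]
    exact Nat.zero_le _
  · obtain ⟨S, hS, hSw⟩ := Nat.sInf_mem hsome
    obtain ⟨T, hT, hTconn, hTw⟩ := hS.exists_connected_setWeight_le
    calc connSafeNum G w ≤ setWeight w T := Nat.sInf_le ⟨T, hT, hTconn, rfl⟩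
      _ ≤ 2 * setWeight w S := hTw
      _ = 2 * safeNum G w := by rw [hSw]; rfl

theorem connSafeNum_le_two_mul_safeNum {V : Type*} [Fintype V] [Nonempty V]
    (G : SimpleGraph V) (w : V → ℕ) :
    connSafeNum G w ≤ 2 * safeNum G w :=
  connSafeNum_le_two_mul_safeNum_general G w
end

section
/- Let c₁, …, c_n and K be positive integers with max{c_i : i ∈ [n]} < K < c₁ + … + c_n. Let T be a star with center vertex x and leaves y₁, …, y_{n+1}, and let w : V(T) → ℕ be given by w(x) = 1, w(y_i) = c_i for i ∈ [n], and w(y_{n+1}) = K + 1. Then every nonempty connected w-safe set in T contains the center vertex x. -/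
/-- The star with center `none` and leaves `some i` for `i : Fin m`. -/
def starGraph (m : ℕ) : SimpleGraph (Option (Fin m)) where
  Adj a b := (a = none ∧ b ≠ none) ∨ (b = none ∧ a ≠ none)
  symm := ⟨by intro a b h; tauto⟩
  loopless := ⟨by rintro a (⟨h1, h2⟩ | ⟨h1, h2⟩) <;> exact h2 h1⟩

/-- The weight function on the star: the center gets weight `1`, the first `n` leaves get
weights `c 0, …, c (n-1)`, and the last leaf gets weight `K + 1`. -/
def starW (n : ℕ) (c : Fin n → ℕ) (K : ℕ) : Option (Fin (n + 1)) → ℕ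
  | none => 1
  | some i => if h : (i : ℕ) < n then c ⟨i, h⟩ else K + 1

/-!
If the center `x` is not in `S`, then `G[S]` has no edges, so a connected `S` is a single
leaf `yᵢ`. The rest of the star is connected through `x`, so safety forces
`w(T) - w(yᵢ) ≤ w(yᵢ)`. This fails for every leaf: for `i ≤ n` because `cᵢ < K`, and for
`y_{n+1}` because `K < c₁ + ⋯ + cₙ`.
-/

section

variable {V : Type*}

lemma setWeight_singleton (w : V → ℕ) (a : V) : setWeight w {a} = w a :=
  finsum_mem_singleton

lemma setWeight_add_setWeight_compl [Fintype V] (w : V → ℕ) (A : Set V) :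
    setWeight w A + setWeight w Aᶜ = ∑ u, w u := by
  rw [setWeight, setWeight, ← finsum_mem_union disjoint_compl_right (Set.toFinite _)
    (Set.toFinite _), Set.union_compl_self, finsum_mem_univ, finsum_eq_sum_of_fintype]

lemma isCompOf_self {G : SimpleGraph V} {S : Set V} (hS : (G.induce S).Connected) :
    IsCompOf G S S :=
  ⟨subset_rfl, hS, fun _ _ _ hv _ => hv⟩

lemma connected_induce_singleton (G : SimpleGraph V) (a : V) : (G.induce {a}).Connected :=
  (SimpleGraph.connected_iff _).2 ⟨.of_subsingleton, inferInstance⟩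

end

namespace starGraph

variable {m : ℕ}

lemma adj_some_none (i : Fin m) : (starGraph m).Adj (some i) none :=
  Or.inr ⟨rfl, Option.some_ne_none i⟩

lemma connected_induce_of_none_mem {A : Set (Option (Fin m))} (hA : none ∈ A) :
    ((starGraph m).induce A).Connected := by
  rw [SimpleGraph.connected_iff_exists_forall_reachable]
  refine ⟨⟨none, hA⟩, ?_⟩
  rintro ⟨_ | i, hi⟩
  · rfl
  · have hadj : ((starGraph m).induce A).Adj ⟨some i, hi⟩ ⟨none, hA⟩ := adj_some_none i
    exact hadj.reachable.symm

lemma induce_eq_bot_of_none_notMem {S : Set (Option (Fin m))} (h : none ∉ S) :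
    (starGraph m).induce S = ⊥ := by
  ext u v
  simp only [SimpleGraph.comap_adj, SimpleGraph.bot_adj, iff_false]
  rintro (⟨hu, -⟩ | ⟨hv, -⟩)
  · exact h (hu ▸ u.2)
  · exact h (hv ▸ v.2)

lemma eq_singleton_some_of_connected {S : Set (Option (Fin m))} (hne : S.Nonempty)
    (hS : ((starGraph m).induce S).Connected) (h : none ∉ S) : ∃ i, S = {some i} := by
  rw [induce_eq_bot_of_none_notMem h] at hS
  have hsub : S.Subsingleton := (Set.subsingleton_coe S).mp
    (SimpleGraph.preconnected_bot_iff_subsingleton.mp hS.preconnected)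
  obtain ⟨_ | i, ha⟩ := hne
  · exact absurd ha h
  · exact ⟨i, hsub.eq_singleton_of_mem ha⟩

lemma setWeight_compl_le_of_isSafeSet {w : Option (Fin m) → ℕ} {i : Fin m}
    (hsafe : IsSafeSet (starGraph m) w {some i}) : setWeight w {some i}ᶜ ≤ w (some i) := by
  have hnone : none ∈ ({some i}ᶜ : Set (Option (Fin m))) := by simp
  rw [← setWeight_singleton w (some i)]
  exact hsafe.2 _ _ (isCompOf_self (connected_induce_singleton _ _))
    (isCompOf_self (connected_induce_of_none_mem hnone))
    ⟨some i, rfl, none, hnone, adj_some_none i⟩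

end starGraph

lemma sum_starW (n : ℕ) (c : Fin n → ℕ) (K : ℕ) :
    ∑ u, starW n c K u = 1 + (∑ i, c i + (K + 1)) := by
  rw [Fintype.sum_option, Fin.sum_univ_castSucc]
  simp [starW]

lemma two_mul_starW_some_lt {n : ℕ} {c : Fin n → ℕ} {K : ℕ} (hmax : ∀ i, c i < K)
    (hsum : K < ∑ i, c i) (i : Fin (n + 1)) :
    2 * starW n c K (some i) < ∑ u, starW n c K u := by
  rw [sum_starW]
  by_cases h : (i : ℕ) < n
  · have hle : c ⟨i, h⟩ ≤ ∑ j, c j :=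
      Finset.single_le_sum (fun j _ => Nat.zero_le (c j)) (Finset.mem_univ _)
    simp only [starW, h, dite_true]
    linarith [hmax ⟨i, h⟩]
  · simp only [starW, h, dite_false]
    omega

theorem center_mem_connSafeSet_general (n : ℕ) (c : Fin n → ℕ) (K : ℕ)
    (hmax : ∀ i, c i < K) (hsum : K < ∑ i, c i)
    (S : Set (Option (Fin (n + 1))))
    (hsafe : IsSafeSet (starGraph (n + 1)) (starW n c K) S)
    (hconn : ((starGraph (n + 1)).induce S).Connected) :
    none ∈ S := by
  by_contra hnone
  obtain ⟨i, rfl⟩ := starGraph.eq_singleton_some_of_connected hsafe.1 hconn hnone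
  have hle := starGraph.setWeight_compl_le_of_isSafeSet hsafe
  have htot := setWeight_add_setWeight_compl (starW n c K) {some i}
  rw [setWeight_singleton] at htot
  have := two_mul_starW_some_lt hmax hsum i
  omega

theorem center_mem_connSafeSet (n : ℕ) (c : Fin n → ℕ) (K : ℕ)
    (hc : ∀ i, 0 < c i) (hK : 0 < K) (hmax : ∀ i, c i < K) (hsum : K < ∑ i, c i)
    (S : Set (Option (Fin (n + 1))))
    (hsafe : IsSafeSet (starGraph (n + 1)) (starW n c K) S)
    (hconn : ((starGraph (n + 1)).induce S).Connected) :
    none ∈ S :=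
  center_mem_connSafeSet_general n c K hmax hsum S hsafe hconn
end

section
/- Let T be a tree of order n rooted at a vertex r, let w : V(T) → ℕ, and let w_max = max{w(u) : u ∈ V(T)}. For a vertex u let c(u) = w(T_u). Call a nonnegative integer W r-nice if there is a set S of vertices of T with r ∈ S, T[S] connected, W ≤ w(S) ≤ W + w_max, and w(D) ≤ W for every connected component D of T − S. Let u(1), …, u(n) be an ordering of the vertices of T such that u(1) = r, c(u(1)) ≥ c(u(2)) ≥ … ≥ c(u(n)), and {u(1), …, u(i)} induces a connected subgraph of T for every i ∈ [n] (such an ordering exists). Let i₁ < … < i_k be the elements of the set I = {i ∈ [n−1] : c(u(i)) > c(u(i+1))}, set i₀ = 1 and i_{k+1} = n, and use the convention c(u(n+1)) = −∞. Then the smallest r-nice nonnegative integer equals min over j ∈ {0, 1, …, k+1} of max{ c(u(i_j + 1)), w(u(1)) + … + w(u(i_j)) − w_max }. -/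
/-- The vertex set of the subtree of the tree `G` rooted at `r` consisting of `u` and all of
its descendants: all vertices `x` such that every walk from `r` to `x` passes through `u`. -/
def subtreeAt {V : Type*} (G : SimpleGraph V) (r u : V) : Set V :=
  {x : V | ∀ p : G.Walk r x, u ∈ p.support}

/-!
For an `r`-nice `W` with witness `S`, let `u(1), …, u(m)` be the longest prefix of weight at most
`W + wmax`. If `m < n`, then `S` misses some `u(i)` with `i ≤ m + 1`; the subtree of `u(i)` lies
in a component of `T − S`, so `c(u(m+1)) ≤ c(u(i)) ≤ W` and `W` dominates the `m`-th candidate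
`max{c(u(m+1)), w(u(1)) + … + w(u(m)) − wmax}`. Conversely, for every `W` between a candidate and
`w(T)` the longest such prefix is itself a witness, because in a tree each component outside a
connected prefix hangs below a later `u(i)`. Finally, between consecutive breakpoints `c(u(i+1))`
stays constant while the prefix sums grow, so the minimum of the candidates is attained on `J`.
-/

namespace SimpleGraph

variable {V : Type*} {G : SimpleGraph V} {r v : V}

lemma exists_isPath_of_preconnected_induce {s : Set V} (hs : (G.induce s).Preconnected)
    {x y : V} (hx : x ∈ s) (hy : y ∈ s) :
    ∃ p : G.Walk x y, p.IsPath ∧ ∀ z ∈ p.support, z ∈ s := by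
  classical
  obtain ⟨p⟩ := hs ⟨x, hx⟩ ⟨y, hy⟩
  let q := p.map (Embedding.induce s).toHom
  refine ⟨q.bypass, q.bypass_isPath, fun z hz => ?_⟩
  have hz' : z ∈ q.support := q.support_bypass_subset_support hz
  rw [Walk.support_map] at hz'
  obtain ⟨z', -, rfl⟩ := List.mem_map.mp hz'
  exact z'.2

lemma mem_subtreeAt_self : v ∈ subtreeAt G r v := fun p => p.end_mem_support

lemma reachable_induce_subtreeAt {x : V} (p : G.Walk x r) (hx : x ∈ subtreeAt G r v) :
    (G.induce (subtreeAt G r v)).Reachable ⟨v, mem_subtreeAt_self⟩ ⟨x, hx⟩ := by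
  induction p with
  | nil =>
    obtain rfl : v = _ := List.mem_singleton.mp (hx Walk.nil)
    rfl
  | @cons x y r hxy q ih =>
    by_cases hxv : x = v
    · subst hxv; rfl
    have hy : y ∈ subtreeAt G r v := fun s => by
      simpa [Walk.support_concat, Ne.symm hxv] using hx (s.concat hxy.symm)
    exact (ih hy).trans (Adj.reachable (G := G.induce _) hxy.symm)

lemma Preconnected.connected_induce_subtreeAt (hG : G.Preconnected) (r v : V) :
    (G.induce (subtreeAt G r v)).Connected :=
  (connected_iff_exists_forall_reachable _).mpr
    ⟨_, fun ⟨x, hx⟩ => reachable_induce_subtreeAt (hG x r).some hx⟩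

lemma subtreeAt_subset_compl {S : Set V} (hS : (G.induce S).Preconnected) (hr : r ∈ S)
    (hv : v ∉ S) : subtreeAt G r v ⊆ Sᶜ := fun x hx hxS => by
  obtain ⟨p, -, hpS⟩ := exists_isPath_of_preconnected_induce hS hr hxS
  exact hv (hpS v (hx p))

lemma exists_isCompOf_superset [Finite V] {A C : Set V} (hC : (G.induce C).Connected)
    (hCA : C ⊆ A) : ∃ D, IsCompOf G A D ∧ C ⊆ D := by
  obtain ⟨D, hCD, ⟨hDA, hD⟩, hmax⟩ :=
    Finite.exists_le_maximal (p := fun D => D ⊆ A ∧ (G.induce D).Connected) ⟨hCA, hC⟩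
  refine ⟨D, ⟨hDA, hD, fun x hx y hy hxy => ?_⟩, hCD⟩
  have hDy : (G.induce (D ∪ {x, y})).Connected :=
    induce_union_connected hD.preconnected (induce_pair_connected_of_adj hxy).preconnected
      ⟨x, hx, by simp⟩
  have hDeq := hmax ⟨Set.union_subset hDA (Set.insert_subset (hDA hx) (by simpa using hy)), hDy⟩
    Set.subset_union_left
  exact hDeq (by simp)

lemma IsAcyclic.subset_subtreeAt (hG : G.IsAcyclic) {P D : Set V}
    (hP : (G.induce P).Preconnected) (hD : (G.induce D).Preconnected) (hr : r ∈ P)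
    (hPD : P ∩ D = {v}) : D ⊆ subtreeAt G r v := by
  classical
  have hv : v ∈ P ∩ D := hPD ▸ rfl
  intro x hx q
  obtain ⟨p₁, hp₁, hp₁P⟩ := exists_isPath_of_preconnected_induce hP hr hv.1
  obtain ⟨p₂, hp₂, hp₂D⟩ := exists_isPath_of_preconnected_induce hD hv.2 hx
  -- `p₁` and `p₂` meet only in `v`, so their concatenation is the unique path from `r` to `x`.
  have hpath : (p₁.append p₂).IsPath := by
    rw [Walk.isPath_def, Walk.support_append, List.nodup_append']
    refine ⟨hp₁.support_nodup, hp₂.support_nodup.sublist (List.tail_sublist _), fun z hz₁ hz₂ => ?_⟩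
    have hzv : z = v := (hPD ▸ ⟨hp₁P z hz₁, hp₂D z (List.mem_of_mem_tail hz₂)⟩ : z ∈ ({v} : Set V))
    have hnodup := hp₂.support_nodup
    rw [← Walk.cons_tail_support, List.nodup_cons] at hnodup
    exact hnodup.1 (hzv ▸ hz₂)
  have hq : q.bypass = p₁.append p₂ :=
    congrArg Subtype.val ((hG.subsingleton_path r x).elim ⟨_, q.bypass_isPath⟩ ⟨_, hpath⟩)
  refine q.support_bypass_subset_support ?_
  rw [hq, Walk.support_append]
  exact List.mem_append_left _ p₁.end_mem_support

end SimpleGraph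

section Weight

variable {V : Type*} (w : V → ℕ)

lemma setWeight_image {ι : Type*} {f : ι → V} {s : Finset ι} (hf : Set.InjOn f s) :
    setWeight w (f '' s) = ∑ i ∈ s, w (f i) := by
  rw [setWeight, finsum_mem_image hf, finsum_mem_coe_finset]

variable [Finite V]

lemma le_setWeight {A : Set V} {v : V} (hv : v ∈ A) : w v ≤ setWeight w A := by
  rw [setWeight, finsum_mem_eq_finite_toFinset_sum _ (Set.toFinite A)]
  exact Finset.single_le_sum (fun _ _ => Nat.zero_le _) ((Set.Finite.mem_toFinset _).mpr hv)

end Weight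

def IsRNice {V : Type*} (G : SimpleGraph V) (r : V) (w : V → ℕ) (wmax W : ℕ) : Prop :=
  ∃ S : Set V, r ∈ S ∧ (G.induce S).Connected ∧ W ≤ setWeight w S ∧ setWeight w S ≤ W + wmax ∧
    ∀ D : Set V, IsCompOf G Sᶜ D → setWeight w D ≤ W

structure IsConnectedOrdering {V : Type*} (G : SimpleGraph V) (r : V) (u : ℕ → V) (n : ℕ) :
    Prop where
  bijOn : Set.BijOn u (Set.Icc 1 n) Set.univ
  map_one : u 1 = r
  connected_prefix : ∀ i, 1 ≤ i → i ≤ n → (G.induce (u '' Set.Icc 1 i)).Connected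

namespace IsConnectedOrdering

open SimpleGraph

variable {V : Type*} {G : SimpleGraph V} {r : V} {u : ℕ → V} {n : ℕ}

lemma exists_eq (hu : IsConnectedOrdering G r u n) (x : V) :
    ∃ i, (1 ≤ i ∧ i ≤ n) ∧ u i = x :=
  hu.bijOn.surjOn (Set.mem_univ x)

lemma one_le (hu : IsConnectedOrdering G r u n) : 1 ≤ n := by
  obtain ⟨i, hi, -⟩ := hu.exists_eq r
  omega

lemma finite (hu : IsConnectedOrdering G r u n) : Finite V :=
  Set.finite_univ_iff.mp (hu.bijOn.image_eq ▸ (Set.finite_Icc 1 n).image u)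

lemma setWeight_prefix [Finite V] (hu : IsConnectedOrdering G r u n) (w : V → ℕ) {m : ℕ}
    (hm : m ≤ n) : setWeight w (u '' Set.Icc 1 m) = ∑ l ∈ Finset.Icc 1 m, w (u l) := by
  rw [← Finset.coe_Icc]
  exact setWeight_image w (hu.bijOn.injOn.mono (by simpa using Set.Icc_subset_Icc_right hm))

/-- The first vertex `u i` of a component `D` outside a prefix meets the prefix `u '' [1, i]`
only in itself, so in a forest all of `D` hangs below `u i`. -/
lemma exists_subset_subtreeAt (hu : IsConnectedOrdering G r u n) (hG : G.IsAcyclic) {m : ℕ}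
    {D : Set V} (hD : IsCompOf G (u '' Set.Icc 1 m)ᶜ D) :
    ∃ i, m < i ∧ i ≤ n ∧ D ⊆ subtreeAt G r (u i) := by
  classical
  obtain ⟨hDm, hD, -⟩ := hD
  have hex : ∃ i, (1 ≤ i ∧ i ≤ n) ∧ u i ∈ D := by
    obtain ⟨x, hx⟩ := hD.nonempty
    obtain ⟨i, hi, rfl⟩ := hu.exists_eq x
    exact ⟨i, hi, hx⟩
  obtain ⟨⟨hi1, hin⟩, hiD⟩ := Nat.find_spec hex
  have hmi : m < Nat.find hex := by
    by_contra! h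
    exact hDm hiD ⟨_, ⟨hi1, h⟩, rfl⟩
  refine ⟨Nat.find hex, hmi, hin, hG.subset_subtreeAt
    (hu.connected_prefix _ hi1 hin).preconnected hD.preconnected ⟨1, ⟨le_rfl, hi1⟩, hu.map_one⟩ ?_⟩
  ext x
  constructor
  · rintro ⟨⟨l, ⟨hl1, hl⟩, rfl⟩, hlD⟩
    rw [le_antisymm hl (Nat.find_min' hex ⟨⟨hl1, hl.trans hin⟩, hlD⟩), Set.mem_singleton_iff]
  · rintro rfl
    exact ⟨⟨_, ⟨hi1, le_rfl⟩, rfl⟩, hiD⟩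

variable [Finite V] {w : V → ℕ} {wmax : ℕ} {c : V → ℕ}

lemma isRNice_of_le (hu : IsConnectedOrdering G r u n) (hG : G.IsAcyclic)
    (hc : ∀ v, c v = setWeight w (subtreeAt G r v)) (hanti : AntitoneOn (c ∘ u) (Set.Icc 1 n))
    (hw : ∀ v, w v ≤ wmax) {j W : ℕ} (hj1 : 1 ≤ j) (hjn : j ≤ n)
    (hsj : ∑ l ∈ Finset.Icc 1 j, w (u l) ≤ W + wmax) (hcj : j < n → c (u (j + 1)) ≤ W)
    (hWn : W ≤ ∑ l ∈ Finset.Icc 1 n, w (u l)) : IsRNice G r w wmax W := by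
  classical
  set m := Nat.findGreatest (fun m => ∑ l ∈ Finset.Icc 1 m, w (u l) ≤ W + wmax) n
  have hjm : j ≤ m := Nat.le_findGreatest hjn hsj
  have hmn : m ≤ n := Nat.findGreatest_le n
  refine ⟨u '' Set.Icc 1 m, ⟨1, ⟨le_rfl, hj1.trans hjm⟩, hu.map_one⟩,
    hu.connected_prefix m (hj1.trans hjm) hmn, ?_, ?_, fun D hD => ?_⟩
  · rw [hu.setWeight_prefix w hmn]
    rcases hmn.eq_or_lt with heq | hlt
    · exact heq ▸ hWn
    have hnext := Nat.findGreatest_is_greatest (lt_add_one m) hlt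
    rw [Finset.sum_Icc_succ_top (by omega)] at hnext
    have := hw (u (m + 1))
    omega
  · rw [hu.setWeight_prefix w hmn]
    exact Nat.findGreatest_spec (P := fun m => ∑ l ∈ Finset.Icc 1 m, w (u l) ≤ W + wmax) hjn hsj
  · obtain ⟨i, hmi, hin, hDi⟩ := hu.exists_subset_subtreeAt hG hD
    calc setWeight w D ≤ setWeight w (subtreeAt G r (u i)) := setWeight_mono w hDi
      _ = c (u i) := (hc _).symm
      _ ≤ c (u (j + 1)) := hanti ⟨by omega, by omega⟩ ⟨by omega, hin⟩ (by omega)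
      _ ≤ W := hcj (by omega)

lemma exists_le_of_isRNice (hu : IsConnectedOrdering G r u n) (hG : G.Preconnected)
    (hc : ∀ v, c v = setWeight w (subtreeAt G r v)) (hanti : AntitoneOn (c ∘ u) (Set.Icc 1 n))
    (hwr : w r ≤ wmax) {W : ℕ} (hW : IsRNice G r w wmax W) :
    ∃ m, 1 ≤ m ∧ m ≤ n ∧ ∑ l ∈ Finset.Icc 1 m, w (u l) ≤ W + wmax ∧
      (m < n → c (u (m + 1)) ≤ W) := by
  classical
  obtain ⟨S, hrS, hS, -, hSW, hcomp⟩ := hW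
  set m := Nat.findGreatest (fun m => ∑ l ∈ Finset.Icc 1 m, w (u l) ≤ W + wmax) n
  have hs1 : ∑ l ∈ Finset.Icc 1 1, w (u l) ≤ W + wmax := by
    simp only [Finset.Icc_self, Finset.sum_singleton, hu.map_one]
    omega
  refine ⟨m, Nat.le_findGreatest hu.one_le hs1, Nat.findGreatest_le n,
    Nat.findGreatest_spec (P := fun m => ∑ l ∈ Finset.Icc 1 m, w (u l) ≤ W + wmax) hu.one_le hs1,
    fun hmn => ?_⟩
  obtain ⟨i, hi, hiS⟩ : ∃ i ∈ Set.Icc 1 (m + 1), u i ∉ S := by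
    by_contra! h
    refine Nat.findGreatest_is_greatest (lt_add_one m) hmn ?_
    rw [← hu.setWeight_prefix w (m := m + 1) hmn]
    exact (setWeight_mono w (Set.image_subset_iff.mpr h)).trans hSW
  obtain ⟨D, hD, hiD⟩ := exists_isCompOf_superset (hG.connected_induce_subtreeAt r (u i))
    (subtreeAt_subset_compl hS.preconnected hrS hiS)
  calc c (u (m + 1)) ≤ c (u i) := hanti ⟨hi.1, hi.2.trans hmn⟩ ⟨by omega, hmn⟩ hi.2
    _ = setWeight w (subtreeAt G r (u i)) := hc _
    _ ≤ setWeight w D := setWeight_mono w hiD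
    _ ≤ W := hcomp D hD

end IsConnectedOrdering

def breakpoints (a : ℕ → ℕ) (n : ℕ) : Set ℕ :=
  {1, n} ∪ {i | 1 ≤ i ∧ i ≤ n - 1 ∧ a (i + 1) < a i}

/-- With `a = c ∘ u` and `s m = w(u(1)) + … + w(u(m))`, this is the paper's
`max{c(u(m+1)), s m − wmax}`, where `c(u(n+1)) = −∞`. -/
def candidate (a s : ℕ → ℕ) (wmax n m : ℕ) : ℤ :=
  if m < n then max (a (m + 1) : ℤ) (s m - wmax) else s n - wmax

section Candidate

variable {a s : ℕ → ℕ} {wmax n : ℕ}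

lemma candidate_le_iff {m : ℕ} (hmn : m ≤ n) (W : ℕ) :
    candidate a s wmax n m ≤ W ↔ s m ≤ W + wmax ∧ (m < n → a (m + 1) ≤ W) := by
  rw [candidate]
  split_ifs with h
  · simp only [max_le_iff, h, forall_const]
    omega
  · obtain rfl : m = n := by omega
    simp only [h, false_imp_iff, and_true]
    omega

lemma candidate_nonneg (h : wmax ≤ s n) (m : ℕ) : 0 ≤ candidate a s wmax n m := by
  rw [candidate]
  split_ifs
  · exact (Nat.cast_nonneg _).trans (le_max_left _ _)
  · omega

lemma exists_mem_breakpoints_candidate_le (hs : Monotone s) {m : ℕ} (hm1 : 1 ≤ m)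
    (hmn : m ≤ n) : ∃ j ∈ breakpoints a n, candidate a s wmax n j ≤ candidate a s wmax n m := by
  induction m, hm1 using Nat.le_induction with
  | base => exact ⟨1, by simp [breakpoints], le_rfl⟩
  | succ m hm ih =>
    by_cases hbreak : m + 1 ∈ breakpoints a n
    · exact ⟨m + 1, hbreak, le_rfl⟩
    obtain ⟨j, hj, hjm⟩ := ih (by omega)
    simp only [breakpoints, Set.mem_union, Set.mem_insert_iff, Set.mem_singleton_iff,
      Set.mem_ofPred_eq, not_or, not_and, not_lt] at hbreak
    refine ⟨j, hj, hjm.trans ?_⟩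
    rw [candidate, candidate, if_pos (by omega), if_pos (by omega)]
    exact max_le_max (by exact_mod_cast hbreak.2 (by omega) (by omega))
      (sub_le_sub_right (by exact_mod_cast hs (by omega)) _)

theorem natCast_sInf_eq_sInf_image_breakpoints (hn : 1 ≤ n) (hs : Monotone s)
    (hwmax : wmax ≤ s n) {P : ℕ → Prop}
    (of_le : ∀ j W, 1 ≤ j → j ≤ n → s j ≤ W + wmax → (j < n → a (j + 1) ≤ W) → W ≤ s n → P W)
    (exists_le : ∀ W, P W → ∃ m, 1 ≤ m ∧ m ≤ n ∧ s m ≤ W + wmax ∧ (m < n → a (m + 1) ≤ W)) :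
    ((sInf {W | P W} : ℕ) : ℤ) = sInf (candidate a s wmax n '' breakpoints a n) := by
  have hsub : breakpoints a n ⊆ Set.Icc 1 n := by
    rintro j ((rfl | rfl) | ⟨hj1, hjn, -⟩)
    exacts [⟨le_rfl, hn⟩, ⟨hn, le_rfl⟩, ⟨hj1, by omega⟩]
  have hnJ : n ∈ breakpoints a n := Or.inl (Or.inr rfl)
  have hbdd := (((Set.finite_Icc 1 n).subset hsub).image (candidate a s wmax n)).bddBelow
  obtain ⟨j, hjJ, hj⟩ := Int.csInf_mem ⟨_, Set.mem_image_of_mem _ hnJ⟩ hbdd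
  have hmin : ∀ i ∈ breakpoints a n, candidate a s wmax n j ≤ candidate a s wmax n i :=
    fun i hi => hj ▸ csInf_le hbdd (Set.mem_image_of_mem _ hi)
  have hleast : IsLeast {W | P W} (candidate a s wmax n j).toNat := by
    obtain ⟨hsj, hcj⟩ := (candidate_le_iff (hsub hjJ).2 _).mp (Int.self_le_toNat _)
    refine ⟨of_le j _ (hsub hjJ).1 (hsub hjJ).2 hsj hcj ?_, fun W hW => ?_⟩
    · have := hmin n hnJ
      rw [show candidate a s wmax n n = s n - wmax from if_neg (lt_irrefl n)] at this
      omega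
    obtain ⟨m, hm1, hmn, hsm, hcm⟩ := exists_le W hW
    obtain ⟨i, hi, him⟩ := exists_mem_breakpoints_candidate_le hs hm1 hmn
    have := (hmin i hi).trans (him.trans ((candidate_le_iff hmn W).mpr ⟨hsm, hcm⟩))
    omega
  rw [hleast.csInf_eq, Int.toNat_of_nonneg (candidate_nonneg hwmax j), hj]

end Candidate

theorem smallest_rnice_eq_general {V : Type*} (G : SimpleGraph V) (hT : G.IsTree)
    (r : V) (w : V → ℕ) (n : ℕ)
    (wmax : ℕ) (hwmax : wmax = ⨆ v, w v)
    -- `c u` is the weight of the subtree rooted at `u`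
    (c : V → ℕ) (hc : ∀ v, c v = setWeight w (subtreeAt G r v))
    -- the ordering `u(1), …, u(n)` of the vertices
    (u : ℕ → V) (hbij : Set.BijOn u (Set.Icc 1 n) Set.univ) (hu1 : u 1 = r)
    (hmono : ∀ i, 1 ≤ i → i ≤ n - 1 → c (u (i + 1)) ≤ c (u i))
    (hinit : ∀ i, 1 ≤ i → i ≤ n → (G.induce (u '' Set.Icc 1 i)).Connected)
    -- `W` is `r`-nice
    (RNice : ℕ → Prop)
    (hRNice : ∀ W : ℕ, RNice W ↔ ∃ S : Set V, r ∈ S ∧ (G.induce S).Connected ∧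
        W ≤ setWeight w S ∧ setWeight w S ≤ W + wmax ∧
        ∀ D : Set V, IsCompOf G Sᶜ D → setWeight w D ≤ W)
    -- the relevant index set `{i₀, i₁, …, i_k, i_{k+1}} = {1, n} ∪ I`
    (J : Set ℕ) (hJ : J = {1, n} ∪ {i | 1 ≤ i ∧ i ≤ n - 1 ∧ c (u (i + 1)) < c (u i)})
    -- the function whose minimum over `J` is taken, with the convention `c(u(n+1)) = -∞`
    (g : ℕ → ℤ)
    (hg : ∀ m : ℕ, g m =
      if m < n then
        max ((c (u (m + 1)) : ℤ)) ((∑ l ∈ Finset.Icc 1 m, (w (u l) : ℤ)) - (wmax : ℤ))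
      else (∑ l ∈ Finset.Icc 1 n, (w (u l) : ℤ)) - (wmax : ℤ)) :
    ((sInf {W : ℕ | RNice W} : ℕ) : ℤ) = sInf (g '' J) := by
  have hu : IsConnectedOrdering G r u n := ⟨hbij, hu1, hinit⟩
  have := hu.finite
  have : Nonempty V := ⟨r⟩
  obtain rfl : J = breakpoints (c ∘ u) n := hJ
  obtain rfl : g = candidate (c ∘ u) (fun m => ∑ l ∈ Finset.Icc 1 m, w (u l)) wmax n :=
    funext fun m => by simp only [hg, candidate, Function.comp_apply, Nat.cast_sum]
  have hw : ∀ v, w v ≤ wmax := fun v => hwmax ▸ le_ciSup (Set.finite_range w).bddAbove v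
  have hwmax_le : wmax ≤ ∑ l ∈ Finset.Icc 1 n, w (u l) := by
    obtain ⟨v, hv⟩ := exists_eq_ciSup_of_finite (f := w)
    calc wmax = w v := hwmax.trans hv.symm
      _ ≤ setWeight w (u '' Set.Icc 1 n) := le_setWeight w (hu.bijOn.image_eq ▸ Set.mem_univ v)
      _ = _ := hu.setWeight_prefix w le_rfl
  have hanti : AntitoneOn (c ∘ u) (Set.Icc 1 n) :=
    antitoneOn_of_succ_le Set.ordConnected_Icc fun i _ hi hi' =>
      hmono i hi.1 (by simp only [Order.succ_eq_add_one, Set.mem_Icc] at hi'; omega)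
  exact natCast_sInf_eq_sInf_image_breakpoints hu.one_le
    (fun a b hab => Finset.sum_le_sum_of_subset (Finset.Icc_subset_Icc_right hab)) hwmax_le
    (fun j W hj1 hjn hsj hcj hWn => (hRNice W).mpr <|
      hu.isRNice_of_le hT.isAcyclic hc hanti hw hj1 hjn hsj hcj hWn)
    (fun W hW => hu.exists_le_of_isRNice hT.connected.preconnected hc hanti (hu1 ▸ hw (u 1))
      ((hRNice W).mp hW))

theorem smallest_rnice_eq {V : Type*} [Fintype V] (G : SimpleGraph V) (hT : G.IsTree)
    (r : V) (w : V → ℕ) (n : ℕ) (hn : n = Fintype.card V)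
    (wmax : ℕ) (hwmax : wmax = ⨆ v, w v)
    -- `c u` is the weight of the subtree rooted at `u`
    (c : V → ℕ) (hc : ∀ v, c v = setWeight w (subtreeAt G r v))
    -- the ordering `u(1), …, u(n)` of the vertices
    (u : ℕ → V) (hbij : Set.BijOn u (Set.Icc 1 n) Set.univ) (hu1 : u 1 = r)
    (hmono : ∀ i, 1 ≤ i → i ≤ n - 1 → c (u (i + 1)) ≤ c (u i))
    (hinit : ∀ i, 1 ≤ i → i ≤ n → (G.induce (u '' Set.Icc 1 i)).Connected)
    -- `W` is `r`-nice
    (RNice : ℕ → Prop)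
    (hRNice : ∀ W : ℕ, RNice W ↔ ∃ S : Set V, r ∈ S ∧ (G.induce S).Connected ∧
        W ≤ setWeight w S ∧ setWeight w S ≤ W + wmax ∧
        ∀ D : Set V, IsCompOf G Sᶜ D → setWeight w D ≤ W)
    -- the relevant index set `{i₀, i₁, …, i_k, i_{k+1}} = {1, n} ∪ I`
    (J : Set ℕ) (hJ : J = {1, n} ∪ {i | 1 ≤ i ∧ i ≤ n - 1 ∧ c (u (i + 1)) < c (u i)})
    -- the function whose minimum over `J` is taken, with the convention `c(u(n+1)) = -∞`
    (g : ℕ → ℤ)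
    (hg : ∀ m : ℕ, g m =
      if m < n then
        max ((c (u (m + 1)) : ℤ)) ((∑ l ∈ Finset.Icc 1 m, (w (u l) : ℤ)) - (wmax : ℤ))
      else (∑ l ∈ Finset.Icc 1 n, (w (u l) : ℤ)) - (wmax : ℤ)) :
    ((sInf {W : ℕ | RNice W} : ℕ) : ℤ) = sInf (g '' J) :=
  smallest_rnice_eq_general G hT r w n wmax hwmax c hc u hbij hu1 hmono hinit RNice hRNice J hJ g hg
end
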